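/- Let X be a smooth cubic surface over a field k that is split by a finite Galois extension K/k of degree a power of 5, and suppose X contains a k-line L. Then the conic bundle f : X → P¹ associated to L admits a section over k, and hence there is a k-line L' ⊂ X disjoint from L. -/

import Mathlib

/-!
Model: the Picard group of a smooth cubic surface over a separably closed
field is identified with `ℤ⁷ = Fin 7 → ℤ` with its standard basis
`λ₀, L₁, …, L₆` (pullback of a line and the six exceptional classes),
intersection form `picInter`, canonical class `KX = -3λ₀ + L₁ + ⋯ + L₆`.
The classes of the 27 lines are exactly the classes `l` with
`l·l = -1` and `KX·l = -1`.
-/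

def picInter (a b : Fin 7 → ℤ) : ℤ := a 0 * b 0 - ∑ i : Fin 6, a i.succ * b i.succ

def KX : Fin 7 → ℤ := ![-3, 1, 1, 1, 1, 1, 1]

def IsLineClass (l : Fin 7 → ℤ) : Prop := picInter l l = -1 ∧ picInter KX l = -1

/-!
Galois model: for a smooth cubic surface `X` over a field `k`, split by a
finite Galois extension with group `G`, the Galois action on the geometric
Picard group is a homomorphism `ρ : G →* AddAut (Fin 7 → ℤ)` preserving the
intersection form, the canonical class and the set of line classes.
`Pic(X)` is identified with the fixed subgroup `fixedSubgroup ρ`, and the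
subgroup `Δ ⊆ Pic(X)` generated by norms (from finite separable extensions)
of lines is `Delta ρ`: the subgroup generated by the Galois-orbit sums
(= norms from the field of definition) of the 27 line classes.
-/

/-- The multiplicative group structure that older Mathlib put on `AddAut M`
(composition as multiplication); current Mathlib makes `AddAut M` an additive group. -/
instance addAutGroupOld (M : Type*) [Add M] : Group (AddAut M) where
  mul g h := AddEquiv.trans h g
  one := AddEquiv.refl _
  inv := AddEquiv.symm
  mul_assoc _ _ _ := rfl
  one_mul _ := rfl
  mul_one _ := rfl
  inv_mul_cancel := AddEquiv.self_trans_symm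

variable {G : Type*} [Group G] [Fintype G]

noncomputable def normOrbit (ρ : G →* AddAut (Fin 7 → ℤ)) (l : Fin 7 → ℤ) : Fin 7 → ℤ :=
  ∑ m ∈ Finset.image (fun g => ρ g l) Finset.univ, m

noncomputable def Delta (ρ : G →* AddAut (Fin 7 → ℤ)) : AddSubgroup (Fin 7 → ℤ) :=
  AddSubgroup.closure { x | ∃ l, IsLineClass l ∧ x = normOrbit ρ l }

def fixedSubgroup (ρ : G →* AddAut (Fin 7 → ℤ)) : AddSubgroup (Fin 7 → ℤ) where
  carrier := {x | ∀ g, ρ g x = x}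
  zero_mem' := fun g => map_zero (ρ g)
  add_mem' := fun {a b} ha hb g => by rw [map_add, ha g, hb g]
  neg_mem' := fun {a} ha g => by rw [map_neg, ha g]

/-!
Writing `l = (a, b₁, …, b₆)`, a line class satisfies `∑ bᵢ = 1 - 3a` and `∑ bᵢ² = a² + 1`.
Cauchy–Schwarz forces `0 ≤ a ≤ 2`, and then `bᵢ (bᵢ + 1) ≤ ∑ bⱼ (bⱼ + 1) = (a - 1)(a - 2)` together
with `bᵢ² ≤ a² + 1` forces `|bᵢ| ≤ 1`; a finite search in this box recovers Schläfli's 27 lines.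
Each of them is disjoint from exactly 16 others. The 5-group `G` permutes the 16 lines disjoint from
the `G`-stable line `L`, and since `5 ∤ 16` it fixes one of them, `L'`. As `-KX - L` is the class
of the conics of the bundle, `L'` meets each fibre once, i.e. it is a section.
-/

lemma picInter_comm (a b : Fin 7 → ℤ) : picInter a b = picInter b a := by
  simp only [picInter, mul_comm]

lemma picInter_neg_sub (a b c : Fin 7 → ℤ) :
    picInter a (-b - c) = -picInter a b - picInter a c := by
  simp only [picInter, Pi.sub_apply, Pi.neg_apply, mul_sub, mul_neg,
    Finset.sum_sub_distrib, Finset.sum_neg_distrib]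
  ring

lemma picInter_self (l : Fin 7 → ℤ) :
    picInter l l = l 0 ^ 2 - ∑ i : Fin 6, l i.succ ^ 2 := by
  simp only [picInter, sq]

lemma picInter_KX_left (l : Fin 7 → ℤ) :
    picInter KX l = -3 * l 0 - ∑ i : Fin 6, l i.succ := by
  simp [picInter, KX, Fin.sum_univ_succ]

theorem IsLineClass.bounds {l : Fin 7 → ℤ} (h : IsLineClass l) :
    (0 ≤ l 0 ∧ l 0 ≤ 2) ∧ ∀ i : Fin 6, -1 ≤ l i.succ ∧ l i.succ ≤ 1 := by
  obtain ⟨hself, hKX⟩ := h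
  rw [picInter_self] at hself
  rw [picInter_KX_left] at hKX
  have hCS := sq_sum_le_card_mul_sum_sq (s := Finset.univ) (f := fun i : Fin 6 => l i.succ)
  simp only [Finset.card_univ, Fintype.card_fin, Nat.cast_ofNat] at hCS
  have ha : 0 ≤ l 0 ∧ l 0 ≤ 2 := by constructor <;> nlinarith
  refine ⟨ha, fun i => ?_⟩
  have hsq : l i.succ ^ 2 ≤ l 0 ^ 2 + 1 := by
    have := Finset.single_le_sum (f := fun j : Fin 6 => l j.succ ^ 2)
      (fun j _ => sq_nonneg _) (Finset.mem_univ i)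
    linarith
  have hprod : l i.succ * (l i.succ + 1) ≤ (l 0 - 1) * (l 0 - 2) := by
    have hsum : ∑ j : Fin 6, l j.succ * (l j.succ + 1) = (l 0 - 1) * (l 0 - 2) := by
      simp only [mul_add, mul_one, ← sq, Finset.sum_add_distrib]
      linarith
    rw [← hsum]
    exact Finset.single_le_sum (f := fun j : Fin 6 => l j.succ * (l j.succ + 1))
      (fun j _ => by rcases le_or_gt 0 (l j.succ) with h | h <;> nlinarith) (Finset.mem_univ i)
  obtain ⟨h0, h2⟩ := ha
  interval_cases l 0 <;> constructor <;> nlinarith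

/-- Rows 0–5 are the exceptional classes `Eᵢ`, rows 6–20 the classes `λ - Eᵢ - Eⱼ`, rows 21–26 the
classes `2λ - ∑ Eₖ + Eⱼ`. -/
def lineClass : Fin 27 → Fin 7 → ℤ :=
  ![![0,1,0,0,0,0,0],
    ![0,0,1,0,0,0,0],
    ![0,0,0,1,0,0,0],
    ![0,0,0,0,1,0,0],
    ![0,0,0,0,0,1,0],
    ![0,0,0,0,0,0,1],
    ![1,-1,-1,0,0,0,0],
    ![1,-1,0,-1,0,0,0],
    ![1,-1,0,0,-1,0,0],
    ![1,-1,0,0,0,-1,0],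
    ![1,-1,0,0,0,0,-1],
    ![1,0,-1,-1,0,0,0],
    ![1,0,-1,0,-1,0,0],
    ![1,0,-1,0,0,-1,0],
    ![1,0,-1,0,0,0,-1],
    ![1,0,0,-1,-1,0,0],
    ![1,0,0,-1,0,-1,0],
    ![1,0,0,-1,0,0,-1],
    ![1,0,0,0,-1,-1,0],
    ![1,0,0,0,-1,0,-1],
    ![1,0,0,0,0,-1,-1],
    ![2,0,-1,-1,-1,-1,-1],
    ![2,-1,0,-1,-1,-1,-1],
    ![2,-1,-1,0,-1,-1,-1],
    ![2,-1,-1,-1,0,-1,-1],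
    ![2,-1,-1,-1,-1,0,-1],
    ![2,-1,-1,-1,-1,-1,0]]

instance : DecidablePred IsLineClass := fun _ => inferInstanceAs (Decidable (_ ∧ _))

theorem isLineClass_lineClass : ∀ j, IsLineClass (lineClass j) := by decide

theorem lineClass_injective : Function.Injective lineClass := by decide

theorem card_filter_picInter_lineClass_eq_zero : ∀ i : Fin 27,
    (Finset.univ.filter fun j => picInter (lineClass i) (lineClass j) = 0).card = 16 := by
  decide

def boxVec (a : Fin 3) (b : Fin 6 → Fin 3) : Fin 7 → ℤ :=
  Fin.cons (a : ℤ) fun i => (b i : ℤ) - 1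

theorem IsLineClass.exists_boxVec_eq {l : Fin 7 → ℤ} (h : IsLineClass l) :
    ∃ a b, boxVec a b = l := by
  obtain ⟨⟨h0, h2⟩, hsucc⟩ := h.bounds
  refine ⟨⟨(l 0).toNat, by omega⟩, fun i => ⟨(l i.succ + 1).toNat, by have := hsucc i; omega⟩, ?_⟩
  conv_rhs => rw [← Fin.cons_self_tail l]
  rw [boxVec]
  congr 1
  · dsimp only
    omega
  · funext i
    have := hsucc i
    simp only [Fin.tail]
    omega

set_option maxRecDepth 10000 in
theorem exists_lineClass_eq_boxVec :
    ∀ a b, IsLineClass (boxVec a b) → ∃ j, lineClass j = boxVec a b := by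
  decide

theorem range_lineClass : Set.range lineClass = {l | IsLineClass l} := by
  ext l
  constructor
  · rintro ⟨j, rfl⟩
    exact isLineClass_lineClass j
  · intro hl
    obtain ⟨a, b, rfl⟩ := hl.exists_boxVec_eq
    exact exists_lineClass_eq_boxVec a b hl

def disjointLines (L : Fin 7 → ℤ) : Set (Fin 7 → ℤ) := {l | IsLineClass l ∧ picInter L l = 0}

theorem ncard_disjointLines {L : Fin 7 → ℤ} (hL : IsLineClass L) :
    (disjointLines L).ncard = 16 := by
  obtain ⟨i, rfl⟩ : L ∈ Set.range lineClass := range_lineClass ▸ hL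
  have hsub : disjointLines (lineClass i) ⊆ Set.range lineClass :=
    range_lineClass ▸ fun _ hl => hl.1
  have hpre : lineClass ⁻¹' disjointLines (lineClass i) =
      ↑(Finset.univ.filter fun j => picInter (lineClass i) (lineClass j) = 0) := by
    ext j
    simp [disjointLines, isLineClass_lineClass]
  rw [← Set.image_preimage_eq_of_subset hsub,
    Set.ncard_image_of_injective _ lineClass_injective, hpre, Set.ncard_coe_finset,
    card_filter_picInter_lineClass_eq_zero]

theorem IsPGroup.exists_fixed_mem_of_not_dvd_ncard {p : ℕ} [Fact p.Prime] {G M : Type*}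
    [Group G] [Add M] (hG : IsPGroup p G) (ρ : G →* AddAut M) {S : Set M}
    (hS : ∀ g, ∀ x ∈ S, ρ g x ∈ S) (hp : ¬p ∣ S.ncard) : ∃ x ∈ S, ∀ g, ρ g x = x := by
  let _ : MulAction G S :=
    { smul g x := ⟨ρ g x, hS g x x.2⟩
      one_smul x := Subtype.ext <| DFunLike.congr_fun (map_one ρ) x.1
      mul_smul g h x := Subtype.ext <| DFunLike.congr_fun (map_mul ρ g h) x.1 }
  obtain ⟨⟨x, hx⟩, hfix⟩ :=
    hG.nonempty_fixed_point_of_prime_not_dvd_card S (by rwa [Nat.card_coe_set_eq])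
  exact ⟨x, hx, fun g => congrArg Subtype.val (hfix g)⟩

theorem stmt14_general
    (ρ : G →* AddAut (Fin 7 → ℤ))
    (hlines : ∀ (g : G) (l : Fin 7 → ℤ), IsLineClass l → IsLineClass (ρ g l))
    (hint : ∀ (g : G) (a b : Fin 7 → ℤ), picInter (ρ g a) (ρ g b) = picInter a b)
    (h5 : IsPGroup 5 G)
    (L : Fin 7 → ℤ) (hL : IsLineClass L) (hLfix : ∀ g : G, ρ g L = L) :
    ∃ L', IsLineClass L' ∧ (∀ g : G, ρ g L' = L') ∧
      picInter L L' = 0 ∧ picInter L' (-KX - L) = 1 := by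
  have : Fact (Nat.Prime 5) := ⟨Nat.prime_five⟩
  have hstable : ∀ g, ∀ l ∈ disjointLines L, ρ g l ∈ disjointLines L :=
    fun g l ⟨hl, hLl⟩ => ⟨hlines g l hl, by rw [← hLfix g, hint, hLl]⟩
  obtain ⟨L', ⟨hL'line, hL'disj⟩, hL'fix⟩ :=
    h5.exists_fixed_mem_of_not_dvd_ncard ρ hstable (by rw [ncard_disjointLines hL]; norm_num)
  refine ⟨L', hL'line, hL'fix, hL'disj, ?_⟩
  rw [picInter_neg_sub, picInter_comm L' KX, hL'line.2, picInter_comm L' L, hL'disj]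
  norm_num

/-- If the smooth cubic surface `X/k` is split by a Galois extension of
degree a power of 5 (so `G` is a 5-group) and contains a `k`-line `L`, then
the conic bundle associated to `L` admits a section over `k`; indeed there
is a `k`-line `L'` disjoint from `L`, which is a section
(`L'·(-KX - L) = 1`). -/
theorem stmt14
    (ρ : G →* AddAut (Fin 7 → ℤ))
    (hlines : ∀ (g : G) (l : Fin 7 → ℤ), IsLineClass l → IsLineClass (ρ g l))
    (hint : ∀ (g : G) (a b : Fin 7 → ℤ), picInter (ρ g a) (ρ g b) = picInter a b)
    (hK : ∀ g : G, ρ g KX = KX)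
    (h5 : IsPGroup 5 G)
    (L : Fin 7 → ℤ) (hL : IsLineClass L) (hLfix : ∀ g : G, ρ g L = L) :
    ∃ L', IsLineClass L' ∧ (∀ g : G, ρ g L' = L') ∧
      picInter L L' = 0 ∧ picInter L' (-KX - L) = 1 :=
  stmt14_general ρ hlines hint h5 L hL hLfix
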